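/- arXiv:1105.3250 — 2 statements merged into one kernel-verified Lean document; each statement's English description precedes it below -/
import Mathlib

section
/- Every synchronizing irreducible subshift is λ-synchronizing: if Λ is irreducible and possesses a word m such that Γ_∞^-(m ω) = Γ_∞^-(m) for all followers ω of m (a synchronizing word in the classical sense), then Λ is λ-synchronizing. -/
open scoped Classical

/-- The language of a subshift over alphabet `A`: nonempty, factorial
(closed under subwords) and extendable on both sides. -/
structure ShiftLang (A : Type*) where
  L : Set (List A)
  nil_mem : [] ∈ L
  factor : ∀ u v w : List A, u ++ v ++ w ∈ L → v ∈ L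
  ext_left : ∀ w ∈ L, ∃ a : A, (a :: w) ∈ L
  ext_right : ∀ w ∈ L, ∃ a : A, (w ++ [a]) ∈ L

namespace ShiftLang

variable {A : Type*} (Λ : ShiftLang A)

/-- Admissible words of length `l`. -/
def B (l : ℕ) : Set (List A) := {w | w ∈ Λ.L ∧ w.length = l}

/-- `Γ_l^-(μ)`: admissible words `ν` of length `l` with `νμ` admissible. -/
def Γminus (l : ℕ) (μ : List A) : Set (List A) := {ν | ν ∈ Λ.B l ∧ ν ++ μ ∈ Λ.L}

/-- `Γ_*^+(μ)`: followers of `μ`. -/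
def Γplus (μ : List A) : Set (List A) := {ω | μ ++ ω ∈ Λ.L}

/-- `S_l(Λ)`: the set of `l`-synchronizing words. -/
def Sync (l : ℕ) : Set (List A) :=
  {μ | μ ∈ Λ.L ∧ ∀ ω ∈ Λ.Γplus μ, Λ.Γminus l μ = Λ.Γminus l (μ ++ ω)}

/-- Irreducibility of a subshift in terms of its language. -/
def Irreducible : Prop := ∀ μ ∈ Λ.L, ∀ ν ∈ Λ.L, ∃ η, μ ++ η ++ ν ∈ Λ.L

/-- `λ`-synchronization of a subshift. -/
def IsLambdaSync : Prop :=
  ∀ l : ℕ, ∀ η ∈ Λ.B l, ∀ k : ℕ, l ≤ k → ∃ ν ∈ Λ.Sync k, η ++ ν ∈ Λ.Sync (k - l)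

/-- `μ ≻ ν` : there is `η` with `Γ_*^+(ν) = Γ_*^+(μην)`. -/
def Succ (μ ν : List A) : Prop := ∃ η, Λ.Γplus ν = Λ.Γplus (μ ++ η ++ ν)

/-- Synchronizing transitivity. -/
def SyncTransitive : Prop := ∀ μ ∈ Λ.L, ∀ ν ∈ Λ.L, Λ.Succ μ ν ∧ Λ.Succ ν μ

/-- The right one-sided shift space `X_Λ`. -/
def X : Set (ℕ → A) := {x | ∀ n : ℕ, (List.ofFn fun i : Fin n => x i) ∈ Λ.L}

end ShiftLang

/- An admissible word ending in a classically synchronizing word `m` is itself classically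
synchronizing, and a classically synchronizing word `μ` lies in every `S_l(Λ)`: a predecessor `ν`
of `μ` remains a predecessor of `μω` because `νμ` and `μω` glue along `μ`. Given `η`, irreducibility
yields `η'` with `ηη'm` admissible, and `ν = η'm` is the required word. -/

namespace ShiftLang

variable {A : Type*} (Λ : ShiftLang A)

def IsSynchronizing (m : List A) : Prop :=
  m ∈ Λ.L ∧ ∀ ν ω : List A, ν ++ m ∈ Λ.L → m ++ ω ∈ Λ.L → ν ++ m ++ ω ∈ Λ.L

variable {Λ}

theorem mem_L_of_append_left_mem {u v : List A} (h : u ++ v ∈ Λ.L) : v ∈ Λ.L :=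
  Λ.factor u v [] (by simpa using h)

theorem mem_L_of_append_right_mem {u v : List A} (h : u ++ v ∈ Λ.L) : u ∈ Λ.L :=
  Λ.factor [] u v (by simpa using h)

theorem IsSynchronizing.append_left {m w : List A} (hm : Λ.IsSynchronizing m)
    (hwm : w ++ m ∈ Λ.L) : Λ.IsSynchronizing (w ++ m) := by
  refine ⟨hwm, fun ν ω hν hω => ?_⟩
  have hglue := hm.2 (ν ++ w) ω (by simpa using hν)
    (mem_L_of_append_left_mem (u := w) (by simpa using hω))
  simpa using hglue

theorem IsSynchronizing.mem_Sync {μ : List A} (hμ : Λ.IsSynchronizing μ) (l : ℕ) :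
    μ ∈ Λ.Sync l := by
  refine ⟨hμ.1, fun ω hω => Set.ext fun ν => ⟨?_, ?_⟩⟩
  · rintro ⟨hνB, hν⟩
    exact ⟨hνB, by simpa using hμ.2 ν ω hν hω⟩
  · rintro ⟨hνB, hν⟩
    exact ⟨hνB, mem_L_of_append_right_mem (v := ω) (by simpa using hν)⟩

end ShiftLang

/-- every synchronizing irreducible subshift is `λ`-synchronizing: if `Λ` is
irreducible and possesses a classically synchronizing word `m` (any predecessor of `m` can be
concatenated with any follower of `m`), then `Λ` is `λ`-synchronizing. -/
theorem isLambdaSync_of_synchronizing {A : Type*} (Λ : ShiftLang A)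
    (hirr : Λ.Irreducible)
    (hsync : ∃ m ∈ Λ.L, ∀ ν ω : List A, ν ++ m ∈ Λ.L → m ++ ω ∈ Λ.L →
      ν ++ m ++ ω ∈ Λ.L) :
    Λ.IsLambdaSync := by
  obtain ⟨m, hm⟩ := hsync
  have hm : Λ.IsSynchronizing m := hm
  intro l η hη k _
  obtain ⟨η', hηη'm⟩ := hirr η hη.1 m hm.1
  have hη'm : η' ++ m ∈ Λ.L :=
    ShiftLang.mem_L_of_append_left_mem (u := η) (by simpa using hηη'm)
  refine ⟨η' ++ m, (hm.append_left hη'm).mem_Sync k, ?_⟩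
  simpa using (hm.append_left (w := η ++ η') hηη'm).mem_Sync (k - l)
end

section
/- Let 𝔏 be a λ-synchronizing, left-resolving, predecessor-separated λ-graph system presenting Λ. For any l-synchronizing word ω ∈ S_l(Λ) there exists a vertex v ∈ V_l that launches ω, and Γ_l^-(ω) = Γ_l^-(v), i.e. the l-predecessor set of the word ω equals the predecessor set of its launching vertex. -/
open scoped Classical

/-- A (left-resolving–free) `λ`-graph system: a labeled Bratteli diagram with `ι`-maps. -/
structure LGS (A : Type*) where
  V : ℕ → Type
  edge : ∀ l : ℕ, V l → A → V (l + 1) → Prop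
  ι : ∀ l : ℕ, V (l + 1) → V l
  ι_surj : ∀ l, Function.Surjective (ι l)
  exists_succ : ∀ l (v : V l), ∃ a u, edge l v a u
  exists_pred : ∀ l (u : V (l + 1)), ∃ a v, edge l v a u
  local_prop : ∀ l (u : V l) (v : V (l + 2)) (a : A),
    (∃ w, edge (l + 1) w a v ∧ ι l w = u) ↔ edge l u a (ι (l + 1) v)

namespace LGS

variable {A : Type*} (G : LGS A)

/-- Labeled paths in a `λ`-graph system. -/
inductive Path : ∀ {l m : ℕ}, G.V l → List A → G.V m → Prop
  | nil {l : ℕ} (v : G.V l) : Path v [] v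
  | cons {l m : ℕ} {v : G.V l} {a : A} {u : G.V (l + 1)} {w : List A} {x : G.V m} :
      G.edge l v a u → Path u w x → Path v (a :: w) x

/-- The word `w` leaves the vertex `v`. -/
def Leaves {l : ℕ} (v : G.V l) (w : List A) : Prop := ∃ m, ∃ u : G.V m, G.Path v w u

/-- The vertex `v` launches the word `w`: `w` leaves `v` and no other vertex of `V_l`. -/
def Launches {l : ℕ} (v : G.V l) (w : List A) : Prop :=
  G.Leaves v w ∧ ∀ v' : G.V l, G.Leaves v' w → v' = v

/-- Left-resolving: edges with the same label have distinct terminal vertices. -/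
def LeftResolving : Prop :=
  ∀ (l : ℕ) (v v' : G.V l) (a : A) (u : G.V (l + 1)), G.edge l v a u → G.edge l v' a u → v = v'

/-- The predecessor set `Γ_l^-(v)` of a vertex: words of length `l` labeling paths from `V_0` to `v`. -/
def ΓminusV {l : ℕ} (v : G.V l) : Set (List A) :=
  {w | w.length = l ∧ ∃ v0 : G.V 0, G.Path v0 w v}

/-- Predecessor-separated: distinct vertices of `V_l` have distinct predecessor sets. -/
def PredecessorSeparated : Prop := ∀ (l : ℕ) (u v : G.V l), G.ΓminusV u = G.ΓminusV v → u = v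

/-- A `λ`-synchronizing `λ`-graph system: every vertex launches some word. -/
def LambdaSynchronizing : Prop := ∀ (l : ℕ) (v : G.V l), ∃ w : List A, G.Launches v w

/-- `G` presents the subshift `Λ`: the language of `Λ` is the set of words labeling paths of `G`. -/
def Presents (Λ : ShiftLang A) : Prop :=
  ∀ w : List A, w ∈ Λ.L ↔ ∃ (l : ℕ) (v : G.V l), G.Leaves v w

/-- Iterated `ι`-map `ι^n : V_{l+n} → V_l`. -/
def iotaPow : ∀ (n : ℕ) {l : ℕ}, G.V (l + n) → G.V l
  | 0, _, v => v
  | n + 1, l, v => iotaPow n (G.ι (l + n) v)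

/-- `ι`-irreducibility of a `λ`-graph system. -/
def IotaIrreducible : Prop :=
  ∀ (l : ℕ) (v u : G.V l) (γ : List A) (t : G.V (l + γ.length)), G.Path u γ t →
    ∃ (n : ℕ) (u' : G.V (l + n)) (w : List A) (t' : G.V (l + n + γ.length)),
      G.iotaPow n u' = u ∧ G.Path v w u' ∧ G.Path u' γ t' ∧
      G.iotaPow n (cast (congrArg G.V (Nat.add_right_comm l n γ.length)) t') = t

/-- `λ`-irreducibility of a `λ`-graph system. -/
def LambdaIrreducible : Prop :=
  ∀ (l : ℕ) (u v : G.V l), ∃ L : ℕ, ∀ w : G.V (l + L),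
    G.iotaPow L w = u → ∃ γ : List A, G.Path v γ w

/-- `Γ_∞^+(v)`: infinite label sequences of infinite paths starting at `v`. -/
def GammaInf {l : ℕ} (v : G.V l) : Set (ℕ → A) :=
  {x | ∃ vs : ∀ n : ℕ, G.V (l + n), vs 0 = v ∧ ∀ n, G.edge (l + n) (vs n) (x n) (vs (n + 1))}

/-- Condition (I): every vertex has at least two distinct infinite follower label sequences. -/
def ConditionI : Prop := ∀ (l : ℕ) (v : G.V l), ∃ x ∈ G.GammaInf v, ∃ y ∈ G.GammaInf v, x ≠ y

/-- `G` is (isomorphic to) the `λ`-synchronizing `λ`-graph system `𝔏^{λ(Λ)}` of `Λ`: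
vertices of `V_l` correspond to `l`-past equivalence classes of `l`-synchronizing words
(identified via their predecessor sets), and edges are as in the canonical construction. -/
def IsLambdaSyncSystem (Λ : ShiftLang A) : Prop :=
  (∀ (l : ℕ) (v : G.V l), ∃ μ ∈ Λ.Sync l, G.ΓminusV v = Λ.Γminus l μ) ∧
  (∀ l : ℕ, ∀ μ ∈ Λ.Sync l, ∃ v : G.V l, G.ΓminusV v = Λ.Γminus l μ) ∧
  (∀ (l : ℕ) (v : G.V l) (a : A) (u : G.V (l + 1)),
    G.edge l v a u ↔ ∃ ν ∈ Λ.Sync (l + 1), (a :: ν) ∈ Λ.L ∧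
      G.ΓminusV u = Λ.Γminus (l + 1) ν ∧ G.ΓminusV v = Λ.Γminus l (a :: ν))

end LGS

/-- The partial isometry `S_w = S_{w_1} ⋯ S_{w_k}` associated with a word. -/
def sword {A R : Type*} [Monoid R] (S : A → R) (w : List A) : R := (w.map S).prod

/-! If `ω` leaves `x ∈ V_l` along a path ending at `u`, pick a word `η` launched by `u`. Since `ω`
is `l`-synchronizing, `Γ_l^-(ω) = Γ_l^-(ωη)`, and any path labeled `νωη` must pass through `u`
after `νω`; left-resolving then forces it through `x` after `ν`. Hence `Γ_l^-(ω) = Γ_l^-(x)` for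
every `x` that `ω` leaves, and predecessor separation makes that `x` unique. -/

namespace LGS

variable {A : Type*} {G : LGS A}

namespace Path

theorem append {l m n : ℕ} {v : G.V l} {y : G.V m} {u : G.V n} {w₁ w₂ : List A}
    (p : G.Path v w₁ y) (q : G.Path y w₂ u) : G.Path v (w₁ ++ w₂) u := by
  induction p with
  | nil => exact q
  | cons e _ ih => exact .cons e (ih q)

theorem level_eq {l m : ℕ} {v : G.V l} {u : G.V m} {w : List A} (p : G.Path v w u) :
    m = l + w.length := by
  induction p with
  | nil => simp
  | cons _ _ ih => simp only [List.length_cons]; omega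

theorem exists_of_append {w₁ w₂ : List A} {l m : ℕ} {v : G.V l} {u : G.V m}
    (p : G.Path v (w₁ ++ w₂) u) : ∃ k, ∃ y : G.V k, G.Path v w₁ y ∧ G.Path y w₂ u := by
  induction w₁ generalizing l v with
  | nil => exact ⟨_, _, .nil _, p⟩
  | cons a w₁ ih =>
    cases p with
    | cons e p =>
      obtain ⟨k, y, p₁, p₂⟩ := ih p
      exact ⟨k, y, .cons e p₁, p₂⟩

theorem exists_of_append_at {w₁ w₂ : List A} {l m k : ℕ} {v : G.V l} {u : G.V m}
    (p : G.Path v (w₁ ++ w₂) u) (hk : k = l + w₁.length) :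
    ∃ y : G.V k, G.Path v w₁ y ∧ G.Path y w₂ u := by
  obtain ⟨k', y, p₁, p₂⟩ := p.exists_of_append
  obtain rfl := p₁.level_eq
  exact hk ▸ ⟨y, p₁, p₂⟩

end Path

theorem LeftResolving.eq_of_path (hlr : G.LeftResolving) {w : List A} {l m : ℕ}
    {x x' : G.V l} {u : G.V m} (p : G.Path x w u) (p' : G.Path x' w u) : x = x' := by
  induction w generalizing l x x' with
  | nil => cases p; cases p'; rfl
  | cons a w ih =>
    cases p with
    | cons e p =>
      cases p' with
      | cons e' p' =>
        obtain rfl := ih p p'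
        exact hlr l x x' a _ e e'

theorem Leaves.ι {l : ℕ} {v : G.V (l + 1)} {w : List A} (h : G.Leaves v w) :
    G.Leaves (G.ι l v) w := by
  induction w generalizing l v with
  | nil => exact ⟨_, _, .nil _⟩
  | cons a w ih =>
    obtain ⟨m, u, p⟩ := h
    cases p with
    | cons e p =>
      obtain ⟨m', u', p'⟩ := ih ⟨m, u, p⟩
      exact ⟨m', u', .cons ((G.local_prop l _ _ a).mp ⟨v, e, rfl⟩) p'⟩

theorem Leaves.exists_ι_eq {l : ℕ} {v : G.V l} {w : List A} (h : G.Leaves v w) :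
    ∃ v' : G.V (l + 1), G.ι l v' = v ∧ G.Leaves v' w := by
  induction w generalizing l v with
  | nil =>
    obtain ⟨v', hv'⟩ := G.ι_surj l v
    exact ⟨v', hv', _, _, .nil _⟩
  | cons a w ih =>
    obtain ⟨m, u, p⟩ := h
    cases p with
    | cons e p =>
      obtain ⟨u', rfl, m', t, q⟩ := ih ⟨m, u, p⟩
      obtain ⟨v', e', hv'⟩ := (G.local_prop l v u' a).mpr e
      exact ⟨v', hv', m', t, .cons e' q⟩

theorem Leaves.exists_level_zero {w : List A} {n : ℕ} {v : G.V n} (h : G.Leaves v w) :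
    ∃ v₀ : G.V 0, G.Leaves v₀ w := by
  induction n with
  | zero => exact ⟨v, h⟩
  | succ n ih => exact ih h.ι

theorem Presents.exists_leaves {Λ : ShiftLang A} (hpres : G.Presents Λ) {w : List A}
    (hw : w ∈ Λ.L) (l : ℕ) : ∃ v : G.V l, G.Leaves v w := by
  induction l with
  | zero =>
    obtain ⟨n, v, h⟩ := (hpres w).mp hw
    exact h.exists_level_zero
  | succ l ih =>
    obtain ⟨v, h⟩ := ih
    obtain ⟨v', -, h'⟩ := h.exists_ι_eq
    exact ⟨v', h'⟩

theorem Presents.ΓminusV_subset_Γminus {Λ : ShiftLang A} (hpres : G.Presents Λ) {l : ℕ}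
    {x : G.V l} {ω : List A} (hx : G.Leaves x ω) : G.ΓminusV x ⊆ Λ.Γminus l ω := by
  rintro ν ⟨hlen, v₀, p⟩
  obtain ⟨m, u, q⟩ := hx
  have hνω : ν ++ ω ∈ Λ.L := (hpres _).mpr ⟨0, v₀, m, u, p.append q⟩
  exact ⟨⟨Λ.factor [] ν ω hνω, hlen⟩, hνω⟩

theorem Γminus_append_subset_ΓminusV {Λ : ShiftLang A} (hpres : G.Presents Λ)
    (hlr : G.LeftResolving) {l m : ℕ} {x : G.V l} {u : G.V m} {ω η : List A}
    (p : G.Path x ω u) (hη : G.Launches u η) : Λ.Γminus l (ω ++ η) ⊆ G.ΓminusV x := by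
  rintro ν ⟨⟨-, hlen⟩, hν⟩
  obtain ⟨v₀, n, t, q⟩ := hpres.exists_leaves hν 0
  obtain ⟨y, qν, q⟩ := q.exists_of_append_at (k := l) (by omega)
  obtain ⟨z, qω, qη⟩ := q.exists_of_append_at p.level_eq
  obtain rfl : z = u := hη.2 z ⟨n, t, qη⟩
  obtain rfl : y = x := hlr.eq_of_path qω p
  exact ⟨hlen, v₀, qν⟩

theorem Γminus_eq_ΓminusV_of_leaves {Λ : ShiftLang A} (hpres : G.Presents Λ)
    (hlr : G.LeftResolving) (hls : G.LambdaSynchronizing) {l : ℕ} {ω : List A}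
    (hω : ω ∈ Λ.Sync l) {x : G.V l} (hx : G.Leaves x ω) : Λ.Γminus l ω = G.ΓminusV x := by
  obtain ⟨m, u, p⟩ := hx
  obtain ⟨η, hη⟩ := hls m u
  obtain ⟨n, t, q⟩ := hη.1
  have hωη : ω ++ η ∈ Λ.L := (hpres _).mpr ⟨l, x, n, t, p.append q⟩
  refine Set.Subset.antisymm ?_ (hpres.ΓminusV_subset_Γminus ⟨m, u, p⟩)
  rw [hω.2 η hωη]
  exact Γminus_append_subset_ΓminusV hpres hlr p hη

end LGS

/-- for a `λ`-synchronizing, left-resolving, predecessor-separated `λ`-graph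
system `G` presenting `Λ` and any `l`-synchronizing word `ω`, there is a vertex `v ∈ V_l`
launching `ω` with `Γ_l^-(ω) = Γ_l^-(v)`. -/
theorem exists_launching_vertex {A : Type*} (G : LGS A) (Λ : ShiftLang A)
    (hpres : G.Presents Λ) (hlr : G.LeftResolving) (hps : G.PredecessorSeparated)
    (hls : G.LambdaSynchronizing) (l : ℕ) (ω : List A) (hω : ω ∈ Λ.Sync l) :
    ∃ v : G.V l, G.Launches v ω ∧ Λ.Γminus l ω = G.ΓminusV v := by
  have hΓ : ∀ x : G.V l, G.Leaves x ω → Λ.Γminus l ω = G.ΓminusV x :=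
    fun _ hx => LGS.Γminus_eq_ΓminusV_of_leaves hpres hlr hls hω hx
  obtain ⟨x, hx⟩ := hpres.exists_leaves hω.1 l
  exact ⟨x, ⟨hx, fun x' hx' => hps l x' x ((hΓ x' hx').symm.trans (hΓ x hx))⟩, hΓ x hx⟩
end
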